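/- With $X$, $A$, $B$, $C = A + B$ as in the perturbed rotation example, suppose $f, g \in X$ are eigenvectors of $C$ with eigenvalue $1$ and $B$ is quasinilpotent. Then $f$ and $g$ are linearly dependent. (If $f(1/2) = g(1/2)$ then $B(f-g) = f-g$, forcing $f = g$ since $B$ is quasinilpotent.) -/

import Mathlib

/-!
`A` vanishes on functions that vanish at `1/2`, so a suitable combination `h = g(1/2) • f - f(1/2) • g` of two
fixed points of `A + B` is a fixed point of `B`. Since `B` is quasinilpotent, `1` lies in the
resolvent set of `B`, so `1 - B` is invertible and `h = 0`.
-/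

theorem ContinuousLinearMap.eq_zero_of_apply_eq_self_of_spectralRadius_lt_one {𝕜 E : Type*}
    [NormedField 𝕜] [NormedAddCommGroup E] [NormedSpace 𝕜 E] {T : E →L[𝕜] E}
    (hT : spectralRadius 𝕜 T < 1) {x : E} (hx : T x = x) : x = 0 := by
  have hres := spectrum.mem_resolventSet_of_spectralRadius_lt (k := (1 : 𝕜)) (a := T)
    (by simpa using hT)
  rw [spectrum.mem_resolventSet_iff, map_one] at hres
  obtain ⟨u, hu⟩ := hres
  have hker : (1 - T) x = 0 := by simp [hx]
  calc x = (↑u⁻¹ : E →L[𝕜] E) ((u : E →L[𝕜] E) x) := by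
        rw [← mul_apply_eq_comp, Units.inv_mul, one_apply_eq_self]
    _ = 0 := by rw [hu, hker, map_zero]

theorem not_linearIndependent_of_add_apply_eq_self {K M : Type*} [Field K] [AddCommGroup M]
    [Module K M] {A B : M →ₗ[K] M} (φ : M →ₗ[K] K) (hA : ∀ x, φ x = 0 → A x = 0)
    (hB : ∀ x, B x = x → x = 0) {f g : M} (hf : (A + B) f = f) (hg : (A + B) g = g) :
    ¬ LinearIndependent K ![f, g] := by
  have eq_zero_of_fixed : ∀ h, (A + B) h = h → φ h = 0 → h = 0 := fun h hfix h0 =>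
    hB h (by simpa [hA h h0] using hfix)
  rw [linearIndependent_fin2]
  rintro ⟨hg0, hnot⟩
  simp only [Matrix.cons_val_zero, Matrix.cons_val_one] at hg0 hnot
  have hφg : φ g ≠ 0 := fun h0 => hg0 (eq_zero_of_fixed g hg h0)
  have hcomb : φ g • f - φ f • g = 0 :=
    eq_zero_of_fixed _ (by rw [map_sub, map_smul, map_smul, hf, hg]) (by simp [mul_comm])
  refine hnot ((φ g)⁻¹ * φ f) ?_
  rw [mul_smul, ← sub_eq_zero.mp hcomb, smul_smul, inv_mul_cancel₀ hφg, one_smul]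

theorem stmt6
    (A B : C(AddCircle (1 : ℝ), ℝ) →L[ℝ] C(AddCircle (1 : ℝ), ℝ))
    (hA : ∀ (x : C(AddCircle (1 : ℝ), ℝ)) (t : AddCircle (1 : ℝ)),
      A x t = x (((1 / 2 : ℝ) : AddCircle (1 : ℝ))))
    (hqn : spectralRadius ℝ B = 0)
    (f g : C(AddCircle (1 : ℝ), ℝ))
    (hf : (A + B) f = f) (hg : (A + B) g = g) :
    ¬ LinearIndependent ℝ ![f, g] :=
  not_linearIndependent_of_add_apply_eq_self
    (ContinuousMap.evalCLM ℝ ((1 / 2 : ℝ) : AddCircle (1 : ℝ))).toLinearMap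
    (fun x hx => by ext t; simpa [hA] using hx)
    (fun _ hx => B.eq_zero_of_apply_eq_self_of_spectralRadius_lt_one (hqn ▸ zero_lt_one) hx)
    hf hg
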